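/- arXiv:1608.02249 — 6 statements merged into one kernel-verified Lean document; each statement's English description precedes it below -/
import Mathlib

section
/- Let u : ℝ² → ℝ be a smooth function of (x,t) and fix λ ∈ ℂ with λ ≠ 0. Define the 2×2 complex matrix-valued functions U(x,t) = λ·[[1, u_x],[u_x, −1]] and V(x,t) = [[ (λ/2)u² + 1/(4λ), (λ/2)u²u_x − u/2 ], [ (λ/2)u²u_x + u/2, −(λ/2)u² − 1/(4λ) ]]. Then the zero-curvature equation ∂_t U − ∂_x V + U·V − V·U = 0 holds identically on ℝ² if and only if u satisfies the short pulse equation u_{xt} = u + (1/6)(u³)_{xx} on ℝ². -/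
open Matrix

/-- `u_x(x,t)`, the partial derivative of `u` in the first (spatial) variable. -/
noncomputable def spUx (u : ℝ → ℝ → ℝ) (x t : ℝ) : ℝ := deriv (fun y => u y t) x

/-- The x-part `U = λ·[[1, u_x],[u_x, −1]]` of the Lax pair of the short pulse equation. -/
noncomputable def spU (u : ℝ → ℝ → ℝ) (lam : ℂ) (x t : ℝ) : Matrix (Fin 2) (Fin 2) ℂ :=
  lam • !![1, (spUx u x t : ℂ); (spUx u x t : ℂ), -1]

/-- The t-part `V` of the Lax pair of the short pulse equation. -/
noncomputable def spV (u : ℝ → ℝ → ℝ) (lam : ℂ) (x t : ℝ) : Matrix (Fin 2) (Fin 2) ℂ :=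
  !![(lam / 2) * (u x t : ℂ) ^ 2 + 1 / (4 * lam),
     (lam / 2) * (u x t : ℂ) ^ 2 * (spUx u x t : ℂ) - (u x t : ℂ) / 2;
     (lam / 2) * (u x t : ℂ) ^ 2 * (spUx u x t : ℂ) + (u x t : ℂ) / 2,
     -((lam / 2) * (u x t : ℂ) ^ 2) - 1 / (4 * lam)]

/-- partial-x derivative function -/
noncomputable def spG (u : ℝ → ℝ → ℝ) : ℝ × ℝ → ℝ :=
  fun p => fderiv ℝ (Function.uncurry u) p (1, 0)

noncomputable def spGx (u : ℝ → ℝ → ℝ) (x t : ℝ) : ℝ := fderiv ℝ (spG u) (x, t) (1, 0)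
noncomputable def spGt (u : ℝ → ℝ → ℝ) (x t : ℝ) : ℝ := fderiv ℝ (spG u) (x, t) (0, 1)

lemma hasDerivAt_partial_x {h : ℝ × ℝ → ℝ} (hh : ContDiff ℝ (⊤ : ℕ∞) h) (x t : ℝ) :
    HasDerivAt (fun y => h (y, t)) (fderiv ℝ h (x, t) (1, 0)) x := by
  have hF : HasFDerivAt h (fderiv ℝ h (x, t)) (x, t) :=
    (hh.differentiable (by simp) (x, t)).hasFDerivAt
  have hφ : HasDerivAt (fun y : ℝ => (y, t)) ((1 : ℝ), (0 : ℝ)) x :=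
    (hasDerivAt_id x).prodMk (hasDerivAt_const x t)
  exact hF.comp_hasDerivAt x hφ

lemma hasDerivAt_partial_t {h : ℝ × ℝ → ℝ} (hh : ContDiff ℝ (⊤ : ℕ∞) h) (x t : ℝ) :
    HasDerivAt (fun s => h (x, s)) (fderiv ℝ h (x, t) (0, 1)) t := by
  have hF : HasFDerivAt h (fderiv ℝ h (x, t)) (x, t) :=
    (hh.differentiable (by simp) (x, t)).hasFDerivAt
  have hφ : HasDerivAt (fun s : ℝ => (x, s)) ((0 : ℝ), (1 : ℝ)) t :=
    (hasDerivAt_const t x).prodMk (hasDerivAt_id t)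
  exact hF.comp_hasDerivAt t hφ

variable {u : ℝ → ℝ → ℝ}

lemma spG_contDiff (hu : ContDiff ℝ (⊤ : ℕ∞) (Function.uncurry u)) : ContDiff ℝ (⊤ : ℕ∞) (spG u) :=
  (hu.fderiv_right (by simp)).clm_apply contDiff_const

lemma spG_hasDerivAt (hu : ContDiff ℝ (⊤ : ℕ∞) (Function.uncurry u)) (x t : ℝ) :
    HasDerivAt (fun y => u y t) (spG u (x, t)) x :=
  hasDerivAt_partial_x hu x t

lemma spUx_eq (hu : ContDiff ℝ (⊤ : ℕ∞) (Function.uncurry u)) (x t : ℝ) :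
    spUx u x t = spG u (x, t) :=
  (spG_hasDerivAt hu x t).deriv

lemma spGx_hasDerivAt (hu : ContDiff ℝ (⊤ : ℕ∞) (Function.uncurry u)) (x t : ℝ) :
    HasDerivAt (fun y => spG u (y, t)) (spGx u x t) x :=
  hasDerivAt_partial_x (spG_contDiff hu) x t

lemma spGt_hasDerivAt (hu : ContDiff ℝ (⊤ : ℕ∞) (Function.uncurry u)) (x t : ℝ) :
    HasDerivAt (fun s => spG u (x, s)) (spGt u x t) t :=
  hasDerivAt_partial_t (spG_contDiff hu) x t

/-- The zero-curvature equation `∂_t U − ∂_x V + [U,V] = 0` holds identically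
iff `u` satisfies the short pulse equation `u_{xt} = u + (1/6)(u³)_{xx}`. -/
theorem zero_curvature_iff_shortPulse (u : ℝ → ℝ → ℝ)
    (hu : ContDiff ℝ (⊤ : ℕ∞) (Function.uncurry u)) (lam : ℂ) (hlam : lam ≠ 0) :
    (∀ x t : ℝ,
      (Matrix.of fun i j => deriv (fun s => spU u lam x s i j) t)
        - (Matrix.of fun i j => deriv (fun y => spV u lam y t i j) x)
        + spU u lam x t * spV u lam x t - spV u lam x t * spU u lam x t = 0)
      ↔ (∀ x t : ℝ,
        deriv (fun s => deriv (fun y => u y s) x) t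
          = u x t + (1 / 6) * deriv (fun y => deriv (fun z => u z t ^ 3) y) x) := by
  have huxfun : spUx u = fun x t => spG u (x, t) :=
    funext fun a => funext fun b => spUx_eq hu a b
  -- rewrite the RHS of the iff
  have hRHS : ∀ x t : ℝ,
      (deriv (fun s => deriv (fun y => u y s) x) t
          = u x t + (1 / 6) * deriv (fun y => deriv (fun z => u z t ^ 3) y) x)
      ↔ spGt u x t = u x t + u x t * spG u (x, t) ^ 2 + u x t ^ 2 * spGx u x t / 2 := by
    intro x t
    have e1 : (fun s => deriv (fun y => u y s) x) = fun s => spG u (x, s) :=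
      funext fun s => (spG_hasDerivAt hu x s).deriv
    have e2 : (fun y => deriv (fun z => u z t ^ 3) y) = fun y => 3 * u y t ^ 2 * spG u (y, t) := by
      funext y
      rw [((spG_hasDerivAt hu y t).fun_pow 3).deriv]
      push_cast; ring
    have e3 : HasDerivAt (fun y => 3 * u y t ^ 2 * spG u (y, t))
        ((3 : ℝ) * ((2 : ℕ) * u x t ^ 1 * spG u (x, t)) * spG u (x, t)
          + 3 * u x t ^ 2 * spGx u x t) x :=
      (((spG_hasDerivAt hu x t).pow 2).const_mul 3).mul (spGx_hasDerivAt hu x t)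
    rw [e1, e2, (spGt_hasDerivAt hu x t).deriv, e3.deriv]
    constructor <;> intro h <;> rw [h] <;> push_cast <;> ring
  -- derivative of U in t
  have hU' : ∀ x t : ℝ,
      (Matrix.of fun i j => deriv (fun s => spU u lam x s i j) t)
        = !![0, lam * (spGt u x t : ℂ); lam * (spGt u x t : ℂ), 0] := by
    intro x t
    have hc : HasDerivAt (fun s => ((spG u (x, s) : ℝ) : ℂ)) ((spGt u x t : ℝ) : ℂ) t :=
      (spGt_hasDerivAt hu x t).ofReal_comp
    ext i j
    fin_cases i <;> fin_cases j <;>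
      simp only [Matrix.of_apply, spU, huxfun, Matrix.smul_apply, smul_eq_mul,
        Matrix.cons_val', Matrix.cons_val_zero, Matrix.cons_val_one, Matrix.head_cons,
        Matrix.empty_val', Matrix.cons_val_fin_one, Matrix.head_fin_const, Fin.mk_zero, Fin.mk_one]
    all_goals first
      | rw [(hc.const_mul lam).deriv]
      | simp
  -- derivative of V in x
  have hV' : ∀ x t : ℝ,
      (Matrix.of fun i j => deriv (fun y => spV u lam y t i j) x)
        = !![lam * (u x t : ℂ) * (spG u (x, t) : ℂ),
             lam * (u x t : ℂ) * (spG u (x, t) : ℂ) ^ 2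
               + lam * (u x t : ℂ) ^ 2 * (spGx u x t : ℂ) / 2 - (spG u (x, t) : ℂ) / 2;
             lam * (u x t : ℂ) * (spG u (x, t) : ℂ) ^ 2
               + lam * (u x t : ℂ) ^ 2 * (spGx u x t : ℂ) / 2 + (spG u (x, t) : ℂ) / 2,
             -(lam * (u x t : ℂ) * (spG u (x, t) : ℂ))] := by
    intro x t
    have hcu : HasDerivAt (fun y => ((u y t : ℝ) : ℂ)) ((spG u (x, t) : ℝ) : ℂ) x :=
      (spG_hasDerivAt hu x t).ofReal_comp
    have hcux : HasDerivAt (fun y => ((spG u (y, t) : ℝ) : ℂ)) ((spGx u x t : ℝ) : ℂ) x :=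
      (spGx_hasDerivAt hu x t).ofReal_comp
    have hsq : HasDerivAt (fun y => ((u y t : ℝ) : ℂ) ^ 2)
        (((spG u (x, t) : ℝ) : ℂ) * ((u x t : ℝ) : ℂ)
          + ((u x t : ℝ) : ℂ) * ((spG u (x, t) : ℝ) : ℂ)) x := by
      simpa only [pow_two] using hcu.fun_mul hcu
    have h00 : HasDerivAt (fun y => (lam / 2) * ((u y t : ℝ) : ℂ) ^ 2 + 1 / (4 * lam))
        ((lam / 2) * (((spG u (x, t) : ℝ) : ℂ) * ((u x t : ℝ) : ℂ)
          + ((u x t : ℝ) : ℂ) * ((spG u (x, t) : ℝ) : ℂ))) x :=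
      (hsq.const_mul (lam / 2)).add_const _
    have hq : HasDerivAt (fun y => (lam / 2) * ((u y t : ℝ) : ℂ) ^ 2 * ((spG u (y, t) : ℝ) : ℂ))
        ((lam / 2) * (((spG u (x, t) : ℝ) : ℂ) * ((u x t : ℝ) : ℂ)
            + ((u x t : ℝ) : ℂ) * ((spG u (x, t) : ℝ) : ℂ)) * ((spG u (x, t) : ℝ) : ℂ)
          + (lam / 2) * ((u x t : ℝ) : ℂ) ^ 2 * ((spGx u x t : ℝ) : ℂ)) x :=
      (hsq.const_mul (lam / 2)).mul hcux
    have h01 := hq.fun_sub (hcu.div_const 2)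
    have h10 := hq.fun_add (hcu.div_const 2)
    have h11 : HasDerivAt (fun y => -((lam / 2) * ((u y t : ℝ) : ℂ) ^ 2) - 1 / (4 * lam))
        (-((lam / 2) * (((spG u (x, t) : ℝ) : ℂ) * ((u x t : ℝ) : ℂ)
          + ((u x t : ℝ) : ℂ) * ((spG u (x, t) : ℝ) : ℂ)))) x :=
      ((hsq.const_mul (lam / 2)).neg).sub_const _
    ext i j
    fin_cases i <;> fin_cases j <;>
      simp only [Matrix.of_apply, spV, huxfun, Matrix.cons_val', Matrix.cons_val_zero,
        Matrix.cons_val_one, Matrix.head_cons, Matrix.empty_val', Matrix.cons_val_fin_one,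
        Matrix.head_fin_const, Fin.mk_zero, Fin.mk_one]
    · rw [h00.deriv]; push_cast; ring
    · rw [h01.deriv]; push_cast; ring
    · rw [h10.deriv]; push_cast; ring
    · rw [h11.deriv]; push_cast; ring
  have hZC : ∀ x t : ℝ,
      (Matrix.of fun i j => deriv (fun s => spU u lam x s i j) t)
        - (Matrix.of fun i j => deriv (fun y => spV u lam y t i j) x)
        + spU u lam x t * spV u lam x t - spV u lam x t * spU u lam x t
      = !![0, lam * ((spGt u x t : ℂ) - (u x t : ℂ) - (u x t : ℂ) * (spG u (x, t) : ℂ) ^ 2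
              - (u x t : ℂ) ^ 2 * (spGx u x t : ℂ) / 2);
           lam * ((spGt u x t : ℂ) - (u x t : ℂ) - (u x t : ℂ) * (spG u (x, t) : ℂ) ^ 2
              - (u x t : ℂ) ^ 2 * (spGx u x t : ℂ) / 2), 0] := by
    intro x t
    rw [hU' x t, hV' x t]
    ext i j
    fin_cases i <;> fin_cases j <;>
      simp [spU, spV, huxfun, Matrix.mul_apply, Fin.sum_univ_succ]
    all_goals try linear_combination (((spG u (x, t) : ℝ) : ℂ) / 2) * mul_inv_cancel₀ hlam
    all_goals try linear_combination (-(((spG u (x, t) : ℝ) : ℂ)) / 2) * mul_inv_cancel₀ hlam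
    all_goals ring
  constructor
  · intro h x t
    rw [hRHS x t]
    have hm := h x t
    rw [hZC x t] at hm
    have h01 := (Matrix.ext_iff.2 hm) 0 1
    simp only [Matrix.cons_val', Matrix.cons_val_zero, Matrix.cons_val_one, Matrix.head_cons,
      Matrix.empty_val', Matrix.cons_val_fin_one, Matrix.zero_apply] at h01
    rcases mul_eq_zero.1 h01 with h' | h'
    · exact absurd h' hlam
    · have : ((spGt u x t : ℝ) : ℂ)
          = ((u x t + u x t * spG u (x, t) ^ 2 + u x t ^ 2 * spGx u x t / 2 : ℝ) : ℂ) := by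
        push_cast
        linear_combination h'
      exact_mod_cast this
  · intro h x t
    have hsp : spGt u x t = u x t + u x t * spG u (x, t) ^ 2 + u x t ^ 2 * spGx u x t / 2 :=
      (hRHS x t).1 (h x t)
    rw [hZC x t]
    have hE : lam * ((spGt u x t : ℂ) - (u x t : ℂ) - (u x t : ℂ) * (spG u (x, t) : ℂ) ^ 2
        - (u x t : ℂ) ^ 2 * (spGx u x t : ℂ) / 2) = 0 := by
      rw [show ((spGt u x t : ℝ) : ℂ) = ((u x t + u x t * spG u (x, t) ^ 2
          + u x t ^ 2 * spGx u x t / 2 : ℝ) : ℂ) by exact_mod_cast hsp]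
      push_cast
      ring
    rw [hE]
    ext i j
    fin_cases i <;> fin_cases j <;> simp
end

section
/- Let u : ℝ² → ℝ be a smooth solution of the short pulse equation u_{xt} = u + (1/6)(u³)_{xx}. Set w = u_x, q = √(1+w²), and P(x,t) = √((1+q)/(2q))·[[1, w/(1+q)], [−w/(1+q), 1]]. Fix k ∈ ℂ, k ≠ 0, and let λ = −ik and V = [[ (λ/2)u² + 1/(4λ), (λ/2)u²u_x − u/2 ], [ (λ/2)u²u_x + u/2, −(λ/2)u² − 1/(4λ) ]]. Then at every point (x,t): (∂_t P)·P⁻¹ + P·V·P⁻¹ = −(i k u² q/2)·σ3 − (1/(4 i k q))·[[1, −w],[−w, −1]] + (u²u_{xx}/(4q²))·[[0,1],[−1,0]], where σ3 = [[1,0],[0,−1]]. -/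
open Matrix

/-- `u_{xx}(x,t)`, the second partial derivative of `u` in the spatial variable. -/
noncomputable def spUxx (u : ℝ → ℝ → ℝ) (x t : ℝ) : ℝ := deriv (fun y => spUx u y t) x

/-- The orthogonal matrix `P(w)` of the gauge transformation, with `q = √(1+w²)`. -/
noncomputable def Pmat (w : ℝ) : Matrix (Fin 2) (Fin 2) ℝ :=
  Real.sqrt ((1 + Real.sqrt (1 + w ^ 2)) / (2 * Real.sqrt (1 + w ^ 2))) •
    !![1, w / (1 + Real.sqrt (1 + w ^ 2)); -(w / (1 + Real.sqrt (1 + w ^ 2))), 1]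

/-- The complexification of `P(u_x(x,t))`. -/
noncomputable def Pc (u : ℝ → ℝ → ℝ) (x t : ℝ) : Matrix (Fin 2) (Fin 2) ℂ :=
  (Pmat (spUx u x t)).map Complex.ofReal

section Aux

noncomputable def qF (v : ℝ) : ℝ := Real.sqrt (1 + v ^ 2)
noncomputable def aF (v : ℝ) : ℝ := Real.sqrt ((1 + qF v) / (2 * qF v))
noncomputable def bF (v : ℝ) : ℝ := aF v * (v / (1 + qF v))
noncomputable def daF (w : ℝ) : ℝ := -w / (4 * qF w ^ 3 * aF w)
noncomputable def dbF (w : ℝ) : ℝ :=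
  daF w * (w / (1 + qF w)) + aF w * ((1 + qF w) - w * (w / qF w)) / (1 + qF w) ^ 2

lemma qF_pos (v : ℝ) : 0 < qF v := Real.sqrt_pos.2 (by positivity)
lemma qF_sq (v : ℝ) : qF v ^ 2 = 1 + v ^ 2 := Real.sq_sqrt (by positivity)
lemma aF_pos (v : ℝ) : 0 < aF v := Real.sqrt_pos.2 (by have := qF_pos v; positivity)
lemma aF_sq (v : ℝ) : aF v ^ 2 = (1 + qF v) / (2 * qF v) :=
  Real.sq_sqrt (by have := qF_pos v; positivity)

lemma one_add_qF_pos (v : ℝ) : 0 < 1 + qF v := by have := qF_pos v; linarith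

lemma bF_sq (v : ℝ) : bF v ^ 2 = (qF v - 1) / (2 * qF v) := by
  have hq := qF_pos v
  have h1 := one_add_qF_pos v
  have hv2 : v ^ 2 = (qF v - 1) * (qF v + 1) := by linear_combination -qF_sq v
  rw [bF, mul_pow, aF_sq, div_pow, hv2]
  field_simp
  ring

lemma aF_mul_bF (v : ℝ) : aF v * bF v = v / (2 * qF v) := by
  have hq := qF_pos v
  have h1 := one_add_qF_pos v
  have : aF v * bF v = aF v ^ 2 * (v / (1 + qF v)) := by rw [bF]; ring
  rw [this, aF_sq]
  field_simp

lemma aF_mul_daF (v : ℝ) : aF v * daF v = -v / (4 * qF v ^ 3) := by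
  have hq := qF_pos v
  have ha := aF_pos v
  rw [daF]
  field_simp

lemma bF_mul_daF (v : ℝ) : bF v * daF v = -v ^ 2 / (4 * qF v ^ 3 * (1 + qF v)) := by
  have hq := qF_pos v
  have ha := aF_pos v
  have h1 := one_add_qF_pos v
  rw [daF, bF]
  field_simp

lemma aF_mul_dbF (v : ℝ) :
    aF v * dbF v = 1 / (2 * qF v) - v ^ 2 / (4 * qF v ^ 3 * (1 + qF v))
      - v ^ 2 / (2 * qF v ^ 2 * (1 + qF v)) := by
  have hq := qF_pos v
  have ha := aF_pos v
  have h1 := one_add_qF_pos v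
  have h2 : aF v * dbF v = (aF v * daF v) * (v / (1 + qF v))
      + aF v ^ 2 * ((1 + qF v) - v * (v / qF v)) / (1 + qF v) ^ 2 := by
    rw [dbF]; ring
  rw [h2, aF_mul_daF, aF_sq]
  field_simp
  ring

lemma bF_mul_dbF (v : ℝ) : bF v * dbF v = v / (4 * qF v ^ 3) := by
  have hq := qF_pos v
  have ha := aF_pos v
  have h1 := one_add_qF_pos v
  have h2 : bF v * dbF v = (v / (1 + qF v)) * (aF v * dbF v) := by rw [bF]; ring
  have hv2 : v ^ 2 = (qF v - 1) * (qF v + 1) := by linear_combination -qF_sq v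
  rw [h2, aF_mul_dbF, hv2]
  field_simp
  ring

lemma hasDerivAt_qF (w : ℝ) : HasDerivAt qF (w / qF w) w := by
  have h1 : HasDerivAt (fun v : ℝ => 1 + v ^ 2) (2 * w) w := by
    simpa using (hasDerivAt_pow 2 w).const_add 1
  have h2 := (Real.hasDerivAt_sqrt (x := 1 + w ^ 2) (by positivity)).comp w h1
  refine h2.congr_deriv ?_
  have := qF_pos w
  rw [show Real.sqrt (1 + w ^ 2) = qF w from rfl]
  field_simp

lemma hasDerivAt_aF (w : ℝ) : HasDerivAt aF (daF w) w := by
  have hq := qF_pos w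
  have ha := aF_pos w
  have h1 : HasDerivAt (fun v => 1 + qF v) (w / qF w) w := (hasDerivAt_qF w).const_add 1
  have h2 : HasDerivAt (fun v => 2 * qF v) (2 * (w / qF w)) w := (hasDerivAt_qF w).const_mul 2
  have h3 := h1.div h2 (by positivity)
  have h4 := (Real.hasDerivAt_sqrt (x := (1 + qF w) / (2 * qF w)) (by positivity)).comp w h3
  refine h4.congr_deriv ?_
  rw [daF, show Real.sqrt ((1 + qF w) / (2 * qF w)) = aF w from rfl]
  field_simp
  ring

lemma hasDerivAt_bF (w : ℝ) : HasDerivAt bF (dbF w) w := by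
  have hq := qF_pos w
  have h1 : HasDerivAt (fun v => 1 + qF v) (w / qF w) w := (hasDerivAt_qF w).const_add 1
  have h2 : HasDerivAt (fun v : ℝ => v / (1 + qF v))
      ((1 * (1 + qF w) - w * (w / qF w)) / (1 + qF w) ^ 2) w :=
    (hasDerivAt_id w).div h1 (by positivity)
  have h3 := (hasDerivAt_aF w).mul h2
  refine h3.congr_deriv ?_
  rw [dbF]
  ring


lemma Pmat_eq (v : ℝ) : Pmat v = !![aF v, bF v; -bF v, aF v] := by
  ext i j
  fin_cases i <;> fin_cases j <;> simp [Pmat, aF, bF, qF] <;> ring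

lemma Pc_eq (u : ℝ → ℝ → ℝ) (x t : ℝ) :
    Pc u x t = !![((aF (spUx u x t) : ℝ) : ℂ), ((bF (spUx u x t) : ℝ) : ℂ);
      -((bF (spUx u x t) : ℝ) : ℂ), ((aF (spUx u x t) : ℝ) : ℂ)] := by
  rw [Pc, Pmat_eq]
  ext i j
  fin_cases i <;> fin_cases j <;> simp

lemma aF_sq_add_bF_sq (v : ℝ) : aF v ^ 2 + bF v ^ 2 = 1 := by
  have hq := qF_pos v
  rw [aF_sq, bF_sq]
  field_simp
  ring

lemma Pc_inv (u : ℝ → ℝ → ℝ) (x t : ℝ) :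
    (Pc u x t)⁻¹ = !![((aF (spUx u x t) : ℝ) : ℂ), -((bF (spUx u x t) : ℝ) : ℂ);
      ((bF (spUx u x t) : ℝ) : ℂ), ((aF (spUx u x t) : ℝ) : ℂ)] := by
  apply Matrix.inv_eq_right_inv
  rw [Pc_eq, Matrix.mul_fin_two]
  have h1 := aF_sq_add_bF_sq (spUx u x t)
  have h1c : ((aF (spUx u x t) : ℝ) : ℂ) ^ 2 + ((bF (spUx u x t) : ℝ) : ℂ) ^ 2 = 1 := by
    exact_mod_cast h1
  ext i j
  fin_cases i <;> fin_cases j <;>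
    simp only [Matrix.of_apply, Fin.zero_eta, Fin.mk_one, Matrix.cons_val',
      Matrix.cons_val_zero, Matrix.cons_val_one, Matrix.head_cons, Matrix.head_fin_const,
      Matrix.empty_val', Matrix.cons_val_fin_one, Matrix.one_fin_two] <;>
    first
    | ring1
    | linear_combination h1c

end Aux

/-- For a smooth solution of the short pulse equation, the gauge-transformed
t-coefficient `(∂_t P)·P⁻¹ + P·V·P⁻¹` equals
`−(iku²q/2)σ3 − (1/(4ikq))[[1,−w],[−w,−1]] + (u²u_{xx}/(4q²))[[0,1],[−1,0]]`,
where `w = u_x`, `q = √(1+w²)` and `λ = −ik`. -/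
theorem gauge_transformed_t_equation (u : ℝ → ℝ → ℝ)
    (hu : ContDiff ℝ (⊤ : ℕ∞) (Function.uncurry u))
    (hsp : ∀ x t : ℝ,
      deriv (fun s => deriv (fun y => u y s) x) t
        = u x t + (1 / 6) * deriv (fun y => deriv (fun z => u z t ^ 3) y) x)
    (k : ℂ) (hk : k ≠ 0) (x t : ℝ) :
    (Matrix.of fun i j => deriv (fun s => Pc u x s i j) t) * (Pc u x t)⁻¹
      + Pc u x t * spV u (-Complex.I * k) x t * (Pc u x t)⁻¹
    = (-(Complex.I * k * (u x t : ℂ) ^ 2 * (Real.sqrt (1 + spUx u x t ^ 2) : ℂ) / 2)) •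
        !![(1 : ℂ), 0; 0, -1]
      - (1 / (4 * Complex.I * k * (Real.sqrt (1 + spUx u x t ^ 2) : ℂ))) •
          !![(1 : ℂ), -(spUx u x t : ℂ); -(spUx u x t : ℂ), -1]
      + (((u x t) ^ 2 * spUxx u x t / (4 * Real.sqrt (1 + spUx u x t ^ 2) ^ 2) : ℝ) : ℂ) •
          !![(0 : ℂ), 1; -1, 0] := by
  set F := Function.uncurry u with hF
  set W : ℝ × ℝ → ℝ := fun p => fderiv ℝ F p (1, 0) with hWdef
  have hWsm : ContDiff ℝ (⊤ : ℕ∞) W := (hu.fderiv_right (by simp)).clm_apply contDiff_const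
  have hux : ∀ y s : ℝ, HasDerivAt (fun y => u y s) (W (y, s)) y := by
    intro y s
    exact ((hu.differentiable (by simp) (y, s)).hasFDerivAt.comp_hasDerivAt y
      ((hasDerivAt_id y).prodMk (hasDerivAt_const y s)))
  have hWx : ∀ y s : ℝ, HasDerivAt (fun y => W (y, s)) (fderiv ℝ W (y, s) (1, 0)) y := by
    intro y s
    exact ((hWsm.differentiable (by simp) (y, s)).hasFDerivAt.comp_hasDerivAt y
      ((hasDerivAt_id y).prodMk (hasDerivAt_const y s)))
  have hWt : ∀ y s : ℝ, HasDerivAt (fun s => W (y, s)) (fderiv ℝ W (y, s) (0, 1)) s := by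
    intro y s
    exact ((hWsm.differentiable (by simp) (y, s)).hasFDerivAt.comp_hasDerivAt s
      ((hasDerivAt_const s y).prodMk (hasDerivAt_id s)))
  have hspUx : ∀ y s : ℝ, spUx u y s = W (y, s) := fun y s => (hux y s).deriv
  set w := W (x, t) with hw
  set Uxx := fderiv ℝ W (x, t) (1, 0) with hUxxdef
  set Wt := fderiv ℝ W (x, t) (0, 1) with hWtdef
  have hspUxx : spUxx u x t = Uxx := by
    have heq : (fun y => spUx u y t) = fun y => W (y, t) := funext fun y => hspUx y t
    rw [spUxx, heq]
    exact (hWx x t).deriv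
  have hWteq : Wt = u x t * (1 + w ^ 2) + u x t ^ 2 * Uxx / 2 := by
    have hcube : ∀ y : ℝ, deriv (fun z => u z t ^ 3) y = 3 * u y t ^ 2 * W (y, t) := by
      intro y
      simpa using ((hux y t).fun_pow 3).deriv
    have hD : deriv (fun y => deriv (fun z => u z t ^ 3) y) x
        = 6 * u x t * w ^ 2 + 3 * u x t ^ 2 * Uxx := by
      have heq : (fun y => deriv (fun z => u z t ^ 3) y) = fun y => 3 * u y t ^ 2 * W (y, t) :=
        funext hcube
      rw [heq]
      have h1 : HasDerivAt (fun y => 3 * u y t ^ 2 * W (y, t))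
          ((3 * (2 * u x t ^ 1 * W (x, t))) * W (x, t)
            + 3 * u x t ^ 2 * fderiv ℝ W (x, t) (1, 0)) x :=
        (((hux x t).pow 2).const_mul 3).mul (hWx x t)
      rw [h1.deriv]
      ring
    have h0 := hsp x t
    have heq : (fun s => deriv (fun y => u y s) x) = fun s => W (x, s) :=
      funext fun s => (hux x s).deriv
    rw [heq, (hWt x t).deriv, hD] at h0
    rw [hWtdef, h0]; ring
  set da := daF w * Wt with hda
  set db := dbF w * Wt with hdb
  -- the derivative matrix
  have hDmat : (Matrix.of fun i j => deriv (fun s => Pc u x s i j) t)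
      = !![((da : ℝ) : ℂ), ((db : ℝ) : ℂ); -((db : ℝ) : ℂ), ((da : ℝ) : ℂ)] := by
    have hwts : HasDerivAt (fun s : ℝ => W (x, s)) Wt t := hWt x t
    have hA : HasDerivAt (fun s : ℝ => aF (W (x, s))) da t :=
      by have h := (hasDerivAt_aF w).comp t hwts; exact h
    have hB : HasDerivAt (fun s : ℝ => bF (W (x, s))) db t :=
      by have h := (hasDerivAt_bF w).comp t hwts; exact h
    have e00 : (fun s => Pc u x s 0 0) = fun s => ((aF (W (x, s)) : ℝ) : ℂ) := by
      funext s; rw [Pc_eq, hspUx x s]; simp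
    have e01 : (fun s => Pc u x s 0 1) = fun s => ((bF (W (x, s)) : ℝ) : ℂ) := by
      funext s; rw [Pc_eq, hspUx x s]; simp
    have e10 : (fun s => Pc u x s 1 0) = fun s => -((bF (W (x, s)) : ℝ) : ℂ) := by
      funext s; rw [Pc_eq, hspUx x s]; simp
    have e11 : (fun s => Pc u x s 1 1) = fun s => ((aF (W (x, s)) : ℝ) : ℂ) := by
      funext s; rw [Pc_eq, hspUx x s]; simp
    ext i j
    fin_cases i <;> fin_cases j <;>
      simp only [Matrix.of_apply, Fin.zero_eta, Fin.mk_one, Matrix.cons_val',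
        Matrix.cons_val_zero, Matrix.cons_val_one, Matrix.head_cons, Matrix.head_fin_const,
        Matrix.empty_val', Matrix.cons_val_fin_one]
    · rw [e00, hA.ofReal_comp.deriv]
    · rw [e01, hB.ofReal_comp.deriv]
    · rw [e10, hB.ofReal_comp.fun_neg.deriv]
    · rw [e11, hA.ofReal_comp.deriv]
  -- scalar relations, complexified
  have hqpos := qF_pos w
  have cqne : ((qF w : ℝ) : ℂ) ≠ 0 := by
    exact_mod_cast hqpos.ne'
  have c1 : ((aF w : ℝ) : ℂ) ^ 2 = (1 + ((qF w : ℝ) : ℂ)) / (2 * ((qF w : ℝ) : ℂ)) := by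
    exact_mod_cast aF_sq w
  have c2 : ((bF w : ℝ) : ℂ) ^ 2 = (((qF w : ℝ) : ℂ) - 1) / (2 * ((qF w : ℝ) : ℂ)) := by
    exact_mod_cast bF_sq w
  have c3 : ((aF w : ℝ) : ℂ) * ((bF w : ℝ) : ℂ) = ((w : ℝ) : ℂ) / (2 * ((qF w : ℝ) : ℂ)) := by
    exact_mod_cast aF_mul_bF w
  have cq2 : ((qF w : ℝ) : ℂ) ^ 2 = 1 + ((w : ℝ) : ℂ) ^ 2 := by
    exact_mod_cast qF_sq w
  have rE0 : aF w * da + bF w * db = 0 := by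
    rw [hda, hdb]
    linear_combination Wt * aF_mul_daF w + Wt * bF_mul_dbF w
  have cE0 : ((aF w : ℝ) : ℂ) * ((da : ℝ) : ℂ) + ((bF w : ℝ) : ℂ) * ((db : ℝ) : ℂ) = 0 := by
    exact_mod_cast rE0
  have rE4 : aF w * db - bF w * da
      = u x t / 2 + u x t ^ 2 * Uxx / (4 * qF w ^ 2) := by
    have t1 : aF w * db - bF w * da = (aF w * dbF w - bF w * daF w) * Wt := by
      rw [hda, hdb]; ring
    have hv2 : w ^ 2 = (qF w - 1) * (qF w + 1) := by linear_combination -qF_sq w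
    rw [t1, aF_mul_dbF, bF_mul_daF, hWteq, hv2]
    have h1 := one_add_qF_pos w
    field_simp
    ring
  have cE4 : ((aF w : ℝ) : ℂ) * ((db : ℝ) : ℂ) - ((bF w : ℝ) : ℂ) * ((da : ℝ) : ℂ)
      = ((u x t : ℝ) : ℂ) / 2 + ((u x t : ℝ) : ℂ) ^ 2 * ((Uxx : ℝ) : ℂ)
        / (4 * ((qF w : ℝ) : ℂ) ^ 2) := by
    exact_mod_cast rE4
  have hqinv : ((qF w : ℝ) : ℂ) * ((qF w : ℝ) : ℂ)⁻¹ = 1 := mul_inv_cancel₀ cqne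
  -- assemble
  rw [hDmat, Pc_inv, Pc_eq, hspUx x t, hspUxx,
    show Real.sqrt (1 + w ^ 2) = qF w from rfl]
  simp only [spV, hspUx x t]
  rw [Matrix.mul_fin_two, Matrix.mul_fin_two, Matrix.mul_fin_two]
  ext i j
  fin_cases i <;> fin_cases j <;>
    simp only [Matrix.of_apply, Fin.zero_eta, Fin.mk_one, Matrix.cons_val',
      Matrix.cons_val_zero, Matrix.cons_val_one, Matrix.head_cons, Matrix.head_fin_const,
      Matrix.empty_val', Matrix.cons_val_fin_one, Matrix.add_apply, Matrix.sub_apply,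
      Matrix.smul_apply, smul_eq_mul] <;>
    push_cast
  · linear_combination cE0 + ((-Complex.I * k) / 2 * ((u x t : ℝ) : ℂ) ^ 2
        + 1 / (4 * (-Complex.I * k))) * (c1 - c2)
      + 2 * ((-Complex.I * k) / 2 * ((u x t : ℝ) : ℂ) ^ 2 * ((w : ℝ) : ℂ)) * c3
      - ((-Complex.I * k) * ((u x t : ℝ) : ℂ) ^ 2 / (2 * ((qF w : ℝ) : ℂ))) * cq2
      - (Complex.I * k * ((u x t : ℝ) : ℂ) ^ 2 * ((qF w : ℝ) : ℂ) / 2) * hqinv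
  · linear_combination cE4 - 2 * ((-Complex.I * k) / 2 * ((u x t : ℝ) : ℂ) ^ 2
        + 1 / (4 * (-Complex.I * k))) * c3
      + ((-Complex.I * k) / 2 * ((u x t : ℝ) : ℂ) ^ 2 * ((w : ℝ) : ℂ)) * (c1 - c2)
      - (((u x t : ℝ) : ℂ) / 2) * (c1 + c2)
      - (((u x t : ℝ) : ℂ) / 2) * hqinv
  · linear_combination -cE4 - 2 * ((-Complex.I * k) / 2 * ((u x t : ℝ) : ℂ) ^ 2
        + 1 / (4 * (-Complex.I * k))) * c3
      + ((-Complex.I * k) / 2 * ((u x t : ℝ) : ℂ) ^ 2 * ((w : ℝ) : ℂ)) * (c1 - c2)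
      + (((u x t : ℝ) : ℂ) / 2) * (c1 + c2)
      + (((u x t : ℝ) : ℂ) / 2) * hqinv
  · linear_combination cE0 - ((-Complex.I * k) / 2 * ((u x t : ℝ) : ℂ) ^ 2
        + 1 / (4 * (-Complex.I * k))) * (c1 - c2)
      - 2 * ((-Complex.I * k) / 2 * ((u x t : ℝ) : ℂ) ^ 2 * ((w : ℝ) : ℂ)) * c3
      + ((-Complex.I * k) * ((u x t : ℝ) : ℂ) ^ 2 / (2 * ((qF w : ℝ) : ℂ))) * cq2
      + (Complex.I * k * ((u x t : ℝ) : ℂ) ^ 2 * ((qF w : ℝ) : ℂ) / 2) * hqinv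
end

section
/- Let u : ℝ² → ℝ be a smooth solution of the short pulse equation u_{xt} = u + (1/6)(u³)_{xx}, and set q(x,t) = √(1 + u_x(x,t)²). Then q satisfies the conservation law ∂_t q = (1/2)·∂_x(u²·q) at every point (x,t). -/
/-- For a smooth solution `u` of the short pulse equation `u_{xt} = u + (1/6)(u³)_{xx}`,
the quantity `q = √(1+u_x²)` satisfies the conservation law `∂_t q = (1/2)∂_x(u²q)`. -/
theorem shortPulse_conservation_law (u : ℝ → ℝ → ℝ)
    (hu : ContDiff ℝ (⊤ : ℕ∞) (Function.uncurry u))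
    (hsp : ∀ x t : ℝ,
      deriv (fun s => deriv (fun y => u y s) x) t
        = u x t + (1 / 6) * deriv (fun y => deriv (fun z => u z t ^ 3) y) x)
    (x t : ℝ) :
    deriv (fun s => Real.sqrt (1 + (deriv (fun y => u y s) x) ^ 2)) t
      = (1 / 2) * deriv (fun y => (u y t) ^ 2 * Real.sqrt (1 + (deriv (fun z => u z t) y) ^ 2)) x := by
  have hdF : Differentiable ℝ (Function.uncurry u) := hu.differentiable (by simp)
  set p : ℝ × ℝ → ℝ := fun z => fderiv ℝ (Function.uncurry u) z (1, 0) with hpdef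
  have hp : ContDiff ℝ (⊤ : ℕ∞) p := (hu.fderiv_right (by simp)).clm_apply contDiff_const
  have hdp : Differentiable ℝ p := hp.differentiable (by simp)
  have key : ∀ (f : ℝ × ℝ → ℝ), Differentiable ℝ f → ∀ a b : ℝ,
      HasDerivAt (fun y => f (y, b)) (fderiv ℝ f (a, b) (1, 0)) a := by
    intro f hf a b
    exact (hf (a, b)).hasFDerivAt.comp_hasDerivAt a
      (HasDerivAt.prodMk (hasDerivAt_id a) (hasDerivAt_const a b))
  have keyt : ∀ (f : ℝ × ℝ → ℝ), Differentiable ℝ f → ∀ a b : ℝ,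
      HasDerivAt (fun s => f (a, s)) (fderiv ℝ f (a, b) (0, 1)) b := by
    intro f hf a b
    exact (hf (a, b)).hasFDerivAt.comp_hasDerivAt b
      (HasDerivAt.prodMk (hasDerivAt_const b a) (hasDerivAt_id b))
  have hux : ∀ a b : ℝ, deriv (fun y => u y b) a = p (a, b) :=
    fun a b => (key (Function.uncurry u) hdF a b).deriv

  -- notation
  set U := u x t with hU
  set P := p (x, t) with hP
  set Px := fderiv ℝ p (x, t) (1, 0) with hPx
  set M := fderiv ℝ p (x, t) (0, 1) with hM
  have hSpos : (0:ℝ) < 1 + P ^ 2 := by positivity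
  have hSne : (1:ℝ) + P ^ 2 ≠ 0 := ne_of_gt hSpos
  set s0 := Real.sqrt (1 + P ^ 2) with hs0
  have hs0pos : 0 < s0 := Real.sqrt_pos.mpr hSpos
  have hs0ne : s0 ≠ 0 := ne_of_gt hs0pos
  have hs0sq : s0 ^ 2 = 1 + P ^ 2 := Real.sq_sqrt (le_of_lt hSpos)
  -- basic HasDerivAt facts at (x,t)
  have hu_x : HasDerivAt (fun y => u y t) P x := key (Function.uncurry u) hdF x t
  have hp_x : HasDerivAt (fun y => p (y, t)) Px x := key p hdp x t
  have hp_t : HasDerivAt (fun s => p (x, s)) M t := keyt p hdp x t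
  -- LHS computation
  have hLHS : deriv (fun s => Real.sqrt (1 + (deriv (fun y => u y s) x) ^ 2)) t
      = (2 * P * M) / (2 * s0) := by
    have h1 : (fun s => Real.sqrt (1 + (deriv (fun y => u y s) x) ^ 2))
        = fun s => Real.sqrt (1 + p (x, s) ^ 2) := by
      funext s; rw [hux x s]
    rw [h1]
    have h2 : HasDerivAt (fun s => 1 + p (x, s) ^ 2) (2 * P ^ 1 * M) t :=
      ((hp_t.pow 2).const_add 1)
    have h3 := h2.sqrt hSne
    simpa using h3.deriv
  -- mixed derivative via hsp
  have hMval : M = U + U * P ^ 2 + (1 / 2) * U ^ 2 * Px := by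
    have e1 : deriv (fun s => deriv (fun y => u y s) x) t = M := by
      have : (fun s => deriv (fun y => u y s) x) = fun s => p (x, s) := by
        funext s; rw [hux x s]
      rw [this]; exact hp_t.deriv
    have hcube : (fun y => deriv (fun z => u z t ^ 3) y)
        = fun y => 3 * u y t ^ 2 * p (y, t) := by
      funext y
      have := ((key (Function.uncurry u) hdF y t).pow 3).deriv
      simpa [Pi.pow_def, hpdef] using this
    have e2 : deriv (fun y => deriv (fun z => u z t ^ 3) y) x
        = 3 * (2 * U ^ 1 * P) * P + 3 * U ^ 2 * Px := by
      rw [hcube]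
      exact (((hu_x.pow 2).const_mul 3).mul hp_x).deriv
    have := hsp x t
    rw [e1, e2] at this
    rw [this]; ring
  -- RHS computation
  have hRHS : deriv (fun y => (u y t) ^ 2 * Real.sqrt (1 + (deriv (fun z => u z t) y) ^ 2)) x
      = (2 * U ^ 1 * P) * s0 + U ^ 2 * ((2 * P ^ 1 * Px) / (2 * s0)) := by
    have h1 : (fun y => (u y t) ^ 2 * Real.sqrt (1 + (deriv (fun z => u z t) y) ^ 2))
        = fun y => (u y t) ^ 2 * Real.sqrt (1 + p (y, t) ^ 2) := by
      funext y; rw [hux y t]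
    rw [h1]
    exact ((hu_x.pow 2).mul (((hp_x.pow 2).const_add 1).sqrt hSne)).deriv
  rw [hLHS, hRHS, hMval]
  field_simp
  linear_combination (-2 * U * P) * hs0sq
end

section
/- Let w : ℝ → ℝ be continuous and integrable, and set u(x) = −∫_x^∞ w(y) dy. Let δ > 0, C > 0, and let Φ̃ : ℝ × ([−δ,δ]∖{0}) → M₂(ℂ) be such that: (a) ‖Φ̃(x,k)‖ ≤ C for all x and k; (b) for each k, y ↦ Φ̃(y,k) is measurable; and (c) for all x ∈ ℝ and all real k with 0 < |k| ≤ δ, Φ̃(x,k) = I + i k ∫_x^∞ w(y)·e^{i k (y−x) σ3}·σ1·Φ̃(y,k)·e^{−i k (y−x) σ3} dy, where σ1 = [[0,1],[1,0]] and σ3 = [[1,0],[0,−1]]. Then for every x ∈ ℝ, lim_{k→0, k real, k≠0} (Φ̃(x,k) − I)/k = −i·u(x)·σ1. -/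
/-!
The integral equation with the bound `C` gives `‖Φ̃(x,k) − I‖ ≤ |k| · C · ‖w‖₁`, so `Φ̃(y,k) → I`
pointwise as `k → 0`. Conjugation by the unitary diagonal `e^{ik(y−x)σ3}` preserves the moduli of
the entries and tends to the identity, so dominated convergence (with majorant `C |w|`) sends the
integral in the equation to `σ1 ∫_x^∞ w = −u(x) σ1`; dividing the equation by `k` gives the claim.
-/

open Matrix MeasureTheory

/-- The diagonal exponential `e^{iθσ3} = diag(e^{iθ}, e^{−iθ})`. -/
noncomputable def expDiag (θ : ℂ) : Matrix (Fin 2) (Fin 2) ℂ :=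
  !![Complex.exp (Complex.I * θ), 0; 0, Complex.exp (-(Complex.I * θ))]

open Filter Topology

local notation "σ₁" => !![(0 : ℂ), 1; 1, 0]

noncomputable def sigma1Twist (θ : ℝ) (M : Matrix (Fin 2) (Fin 2) ℂ) : Matrix (Fin 2) (Fin 2) ℂ :=
  expDiag θ * σ₁ * M * expDiag (-θ)

theorem sigma1Twist_apply (θ : ℝ) (M : Matrix (Fin 2) (Fin 2) ℂ) (i j : Fin 2) :
    sigma1Twist θ M i j = Complex.exp (↑(θ * ![1, -1] i) * Complex.I) * M (Equiv.swap 0 1 i) j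
      * Complex.exp (↑(-(θ * ![1, -1] j)) * Complex.I) := by
  fin_cases i <;> fin_cases j <;>
    simp [sigma1Twist, expDiag, Matrix.mul_apply, Matrix.vecMul, dotProduct, Fin.sum_univ_two] <;>
    ring_nf

theorem norm_sigma1Twist_apply (θ : ℝ) (M : Matrix (Fin 2) (Fin 2) ℂ) (i j : Fin 2) :
    ‖sigma1Twist θ M i j‖ = ‖M (Equiv.swap 0 1 i) j‖ := by
  simp only [sigma1Twist_apply, norm_mul, Complex.norm_exp_ofReal_mul_I, one_mul, mul_one]

theorem sigma1_apply (i j : Fin 2) :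
    σ₁ i j = (1 : Matrix (Fin 2) (Fin 2) ℂ) (Equiv.swap 0 1 i) j := by
  fin_cases i <;> fin_cases j <;> simp [Matrix.one_apply]

theorem tendsto_sigma1Twist_apply {α : Type*} {l : Filter α} {θ : α → ℝ}
    {M : α → Matrix (Fin 2) (Fin 2) ℂ} (hθ : Tendsto θ l (𝓝 0))
    (hM : ∀ i j, Tendsto (fun a => M a i j) l (𝓝 ((1 : Matrix (Fin 2) (Fin 2) ℂ) i j)))
    (i j : Fin 2) : Tendsto (fun a => sigma1Twist (θ a) (M a) i j) l (𝓝 (σ₁ i j)) := by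
  have hexp : ∀ s : ℝ, Tendsto (fun a => Complex.exp (↑(θ a * s) * Complex.I)) l (𝓝 1) := by
    intro s
    have : Continuous fun t : ℝ => Complex.exp (↑(t * s) * Complex.I) := by fun_prop
    simpa [Function.comp_def] using (this.tendsto 0).comp hθ
  simp only [sigma1Twist_apply, sigma1_apply]
  simpa using ((hexp (![1, -1] i)).mul (hM _ j)).mul (hexp (-![1, -1] j))

theorem measurable_sigma1Twist_apply {θ : ℝ → ℝ} {M : ℝ → Matrix (Fin 2) (Fin 2) ℂ}
    (hθ : Measurable θ) (hM : ∀ i j, Measurable fun y => M y i j) (i j : Fin 2) :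
    Measurable fun y => sigma1Twist (θ y) (M y) i j := by
  simp only [sigma1Twist_apply]
  exact ((by fun_prop : Measurable _).mul (hM _ j)).mul (by fun_prop)

theorem norm_setIntegral_le_integral_of_norm_le {α E : Type*} [MeasurableSpace α]
    [NormedAddCommGroup E] [NormedSpace ℝ E] {μ : Measure α} {f : α → E} {b : α → ℝ}
    (hb : Integrable b μ) (hf : ∀ a, ‖f a‖ ≤ b a) (s : Set α) :
    ‖∫ a in s, f a ∂μ‖ ≤ ∫ a, b a ∂μ :=
  calc ‖∫ a in s, f a ∂μ‖ ≤ ∫ a in s, b a ∂μ :=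
        norm_integral_le_of_norm_le hb.restrict (.of_forall hf)
    _ ≤ ∫ a, b a ∂μ :=
        setIntegral_le_integral hb (.of_forall fun a => (norm_nonneg _).trans (hf a))

theorem eventually_ne_zero_and_abs_le {δ : ℝ} (hδ : 0 < δ) :
    ∀ᶠ k in 𝓝[≠] (0 : ℝ), k ≠ 0 ∧ |k| ≤ δ :=
  (eventually_mem_nhdsWithin (a := 0) (s := {0}ᶜ)).and
    (nhdsWithin_le_nhds (Metric.closedBall_mem_nhds 0 hδ)) |>.mono
    fun _ hk => ⟨hk.1, by simpa using hk.2⟩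

def IsJostSolution (w : ℝ → ℝ) (δ : ℝ) (Φ : ℝ → ℝ → Matrix (Fin 2) (Fin 2) ℂ) : Prop :=
  ∀ x k : ℝ, k ≠ 0 → |k| ≤ δ → ∀ i j,
    Φ x k i j = (1 : Matrix (Fin 2) (Fin 2) ℂ) i j
      + Complex.I * k * ∫ y in Set.Ioi x, (w y : ℂ) * sigma1Twist (k * (y - x)) (Φ y k) i j

section IsJostSolution

variable {w : ℝ → ℝ} {δ C : ℝ} {Φ : ℝ → ℝ → Matrix (Fin 2) (Fin 2) ℂ}

theorem norm_ofReal_mul_sigma1Twist_apply_le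
    (hbound : ∀ (x k : ℝ), k ≠ 0 → |k| ≤ δ → ∀ i j, ‖Φ x k i j‖ ≤ C)
    {k : ℝ} (hk : k ≠ 0) (hkδ : |k| ≤ δ) (x y : ℝ) (i j : Fin 2) :
    ‖(w y : ℂ) * sigma1Twist (k * (y - x)) (Φ y k) i j‖ ≤ C * |w y| := by
  rw [norm_mul, norm_sigma1Twist_apply, Complex.norm_real, Real.norm_eq_abs, mul_comm]
  exact mul_le_mul_of_nonneg_right (hbound y k hk hkδ _ j) (abs_nonneg _)

theorem IsJostSolution.norm_sub_one_le (hΦ : IsJostSolution w δ Φ) (hw : Integrable w)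
    (hbound : ∀ (x k : ℝ), k ≠ 0 → |k| ≤ δ → ∀ i j, ‖Φ x k i j‖ ≤ C)
    {k : ℝ} (hk : k ≠ 0) (hkδ : |k| ≤ δ) (x : ℝ) (i j : Fin 2) :
    ‖Φ x k i j - (1 : Matrix (Fin 2) (Fin 2) ℂ) i j‖ ≤ |k| * (C * ∫ y, |w y|) := by
  rw [hΦ x k hk hkδ, add_sub_cancel_left, norm_mul, norm_mul, Complex.norm_I, one_mul,
    Complex.norm_real, Real.norm_eq_abs, ← integral_const_mul]
  exact mul_le_mul_of_nonneg_left (norm_setIntegral_le_integral_of_norm_le (hw.abs.const_mul C)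
    (norm_ofReal_mul_sigma1Twist_apply_le hbound hk hkδ x · i j) _) (abs_nonneg k)

theorem IsJostSolution.tendsto_apply (hΦ : IsJostSolution w δ Φ) (hw : Integrable w)
    (hδ : 0 < δ) (hbound : ∀ (x k : ℝ), k ≠ 0 → |k| ≤ δ → ∀ i j, ‖Φ x k i j‖ ≤ C)
    (x : ℝ) (i j : Fin 2) :
    Tendsto (fun k => Φ x k i j) (𝓝[≠] 0) (𝓝 ((1 : Matrix (Fin 2) (Fin 2) ℂ) i j)) := by
  have hsmall : Tendsto (fun k : ℝ => |k| * (C * ∫ y, |w y|)) (𝓝[≠] 0) (𝓝 0) := by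
    simpa using ((continuous_abs.tendsto (0 : ℝ)).mul_const _).mono_left nhdsWithin_le_nhds
  refine tendsto_sub_nhds_zero_iff.1 (squeeze_zero_norm' ?_ hsmall)
  filter_upwards [eventually_ne_zero_and_abs_le hδ] with k ⟨hk, hkδ⟩
  exact hΦ.norm_sub_one_le hw hbound hk hkδ x i j

theorem IsJostSolution.tendsto_setIntegral (hΦ : IsJostSolution w δ Φ) (hw : Integrable w)
    (hδ : 0 < δ) (hbound : ∀ (x k : ℝ), k ≠ 0 → |k| ≤ δ → ∀ i j, ‖Φ x k i j‖ ≤ C)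
    (hmeas : ∀ (k : ℝ) (i j : Fin 2), Measurable fun y => Φ y k i j) (x : ℝ) (i j : Fin 2) :
    Tendsto (fun k : ℝ => ∫ y in Set.Ioi x, (w y : ℂ) * sigma1Twist (k * (y - x)) (Φ y k) i j)
      (𝓝[≠] 0) (𝓝 ((∫ y in Set.Ioi x, w y : ℝ) * σ₁ i j)) := by
  rw [← integral_complex_ofReal, ← integral_mul_const]
  refine tendsto_integral_filter_of_dominated_convergence (fun y => C * |w y|) ?_ ?_
    (hw.abs.const_mul C).restrict (.of_forall fun y => ?_)
  · refine .of_forall fun k => AEStronglyMeasurable.restrict ?_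
    exact (Complex.continuous_ofReal.comp_aestronglyMeasurable hw.aestronglyMeasurable).mul
      (measurable_sigma1Twist_apply (by fun_prop) (hmeas k) i j).aestronglyMeasurable
  · filter_upwards [eventually_ne_zero_and_abs_le hδ] with k ⟨hk, hkδ⟩
    exact .of_forall fun y => norm_ofReal_mul_sigma1Twist_apply_le hbound hk hkδ x y i j
  · have hθ : Tendsto (fun k : ℝ => k * (y - x)) (𝓝[≠] 0) (𝓝 0) := by
      simpa using ((continuous_id.mul_const (y - x)).tendsto 0).mono_left nhdsWithin_le_nhds
    exact (tendsto_sigma1Twist_apply hθ (hΦ.tendsto_apply hw hδ hbound y) i j).const_mul _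

end IsJostSolution

theorem jost_small_k_expansion_general
    (w : ℝ → ℝ) (hw_int : Integrable w)
    (u : ℝ → ℝ) (hu : ∀ x, u x = -∫ y in Set.Ioi x, w y)
    (δ C : ℝ) (hδ : 0 < δ)
    (Φ : ℝ → ℝ → Matrix (Fin 2) (Fin 2) ℂ)
    (hbound : ∀ (x k : ℝ), k ≠ 0 → |k| ≤ δ → ∀ i j, ‖Φ x k i j‖ ≤ C)
    (hmeas : ∀ (k : ℝ) (i j : Fin 2), Measurable fun y => Φ y k i j)
    (hinteq : ∀ (x k : ℝ), k ≠ 0 → |k| ≤ δ → ∀ i j,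
      Φ x k i j = (1 : Matrix (Fin 2) (Fin 2) ℂ) i j
        + Complex.I * (k : ℂ) * ∫ y in Set.Ioi x,
            (w y : ℂ) * ((expDiag ((k * (y - x) : ℝ) : ℂ) * !![0, 1; 1, 0] * Φ y k
              * expDiag (-((k * (y - x) : ℝ) : ℂ)) : Matrix (Fin 2) (Fin 2) ℂ) i j))
    (x : ℝ) :
    Filter.Tendsto (fun k : ℝ => k⁻¹ • (Φ x k - 1))
      (nhdsWithin 0 {0}ᶜ)
      (nhds ((-(Complex.I * (u x : ℂ))) • !![(0 : ℂ), 1; 1, 0])) := by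
  have hΦ : IsJostSolution w δ Φ := hinteq
  refine tendsto_pi_nhds.2 fun i => tendsto_pi_nhds.2 fun j => ?_
  have hlimit : ((-(Complex.I * (u x : ℂ))) • σ₁) i j
      = Complex.I * ((∫ y in Set.Ioi x, w y : ℝ) * σ₁ i j) := by
    rw [Matrix.smul_apply, smul_eq_mul, hu]
    push_cast
    ring
  rw [hlimit]
  refine ((hΦ.tendsto_setIntegral hw_int hδ hbound hmeas x i j).const_mul _).congr' ?_
  filter_upwards [eventually_ne_zero_and_abs_le hδ] with k ⟨hk, hkδ⟩
  rw [Matrix.smul_apply, Matrix.sub_apply, hΦ x k hk hkδ, add_sub_cancel_left, Complex.real_smul,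
    Complex.ofReal_inv, ← mul_assoc, mul_left_comm,
    inv_mul_cancel₀ (Complex.ofReal_ne_zero.2 hk), mul_one]

/-- Small-`k` expansion of the Jost solutions of the `k → 0` normalized Lax pair of the
short pulse equation: if `Φ̃(x,k)` is bounded, measurable in `x`, and satisfies
`Φ̃(x,k) = I + ik∫_x^∞ w(y)·e^{ik(y−x)σ3}·σ1·Φ̃(y,k)·e^{−ik(y−x)σ3} dy`
for real `0 < |k| ≤ δ`, then `(Φ̃(x,k) − I)/k → −i·u(x)·σ1` as `k → 0`, where
`u(x) = −∫_x^∞ w(y) dy`. -/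
theorem jost_small_k_expansion
    (w : ℝ → ℝ) (hw_cont : Continuous w) (hw_int : Integrable w)
    (u : ℝ → ℝ) (hu : ∀ x, u x = -∫ y in Set.Ioi x, w y)
    (δ C : ℝ) (hδ : 0 < δ) (hC : 0 < C)
    (Φ : ℝ → ℝ → Matrix (Fin 2) (Fin 2) ℂ)
    (hbound : ∀ (x k : ℝ), k ≠ 0 → |k| ≤ δ → ∀ i j, ‖Φ x k i j‖ ≤ C)
    (hmeas : ∀ (k : ℝ) (i j : Fin 2), Measurable fun y => Φ y k i j)
    (hinteq : ∀ (x k : ℝ), k ≠ 0 → |k| ≤ δ → ∀ i j,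
      Φ x k i j = (1 : Matrix (Fin 2) (Fin 2) ℂ) i j
        + Complex.I * (k : ℂ) * ∫ y in Set.Ioi x,
            (w y : ℂ) * ((expDiag ((k * (y - x) : ℝ) : ℂ) * !![0, 1; 1, 0] * Φ y k
              * expDiag (-((k * (y - x) : ℝ) : ℂ)) : Matrix (Fin 2) (Fin 2) ℂ) i j))
    (x : ℝ) :
    Filter.Tendsto (fun k : ℝ => k⁻¹ • (Φ x k - 1))
      (nhdsWithin 0 {0}ᶜ)
      (nhds ((-(Complex.I * (u x : ℂ))) • !![(0 : ℂ), 1; 1, 0])) :=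
  jost_small_k_expansion_general w hw_int u hu δ C hδ Φ hbound hmeas hinteq x
end

section
/- Let μ > 0 and ν > 0 satisfy ν/μ < tan(π/8). Then for all ψ, φ ∈ ℝ: 1 − 8μ²ν²·sin²ψ·cosh²φ/(ν²·sin²ψ + μ²·cosh²φ)² > 0. -/
lemma tan_pi_div_eight' : Real.tan (Real.pi / 8) = Real.sqrt 2 - 1 := by
  have hs : Real.sqrt 2 ^ 2 = 2 := Real.sq_sqrt (by norm_num)
  have h1 : (1:ℝ) < Real.sqrt 2 := by nlinarith [Real.sqrt_nonneg 2]
  have key : (2 - Real.sqrt 2) = (Real.sqrt 2 - 1) ^ 2 * (2 + Real.sqrt 2) := by nlinarith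
  have hsq : Real.sqrt (2 - Real.sqrt 2)
      = (Real.sqrt 2 - 1) * Real.sqrt (2 + Real.sqrt 2) := by
    rw [key, Real.sqrt_mul (sq_nonneg _), Real.sqrt_sq (by linarith)]
  have hne : Real.sqrt (2 + Real.sqrt 2) ≠ 0 := by positivity
  rw [Real.tan_eq_sin_div_cos, Real.sin_pi_div_eight, Real.cos_pi_div_eight, hsq]
  field_simp

lemma key_ineq (r a b : ℝ) (hr : 0 ≤ r) (hrr : r ^ 2 = 2) (ha : 0 ≤ a)
    (h2 : a * (3 + 2 * r) < b) : 8 * a * b < (a + b) ^ 2 := by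
  have h3 : 0 < b - (3 - 2 * r) * a := by nlinarith
  have h4 : 0 < b - (3 + 2 * r) * a := by nlinarith
  have hexp : (b - (3 + 2 * r) * a) * (b - (3 - 2 * r) * a)
      = (a + b) ^ 2 - 8 * a * b := by linear_combination (-4 * a ^ 2) * hrr
  nlinarith [mul_pos h4 h3]

/-- If `ν/μ < tan(π/8)` then `∂x/∂x̂ > 0` everywhere: the breather of the short pulse
equation is a smooth (single-valued) solution. -/
theorem breather_smooth (μ ν : ℝ) (hμ : 0 < μ) (hν : 0 < ν)
    (h : ν / μ < Real.tan (Real.pi / 8)) :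
    ∀ ψ φ : ℝ,
      0 < 1 - 8 * μ ^ 2 * ν ^ 2 * Real.sin ψ ^ 2 * Real.cosh φ ^ 2
            / (ν ^ 2 * Real.sin ψ ^ 2 + μ ^ 2 * Real.cosh φ ^ 2) ^ 2 := by
  intro ψ φ
  have hs : Real.sqrt 2 ^ 2 = 2 := Real.sq_sqrt (by norm_num)
  have hs0 : (0:ℝ) ≤ Real.sqrt 2 := Real.sqrt_nonneg 2
  rw [tan_pi_div_eight'] at h
  have hνμ : ν < μ * (Real.sqrt 2 - 1) := by
    rwa [div_lt_iff₀ hμ, mul_comm] at h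
  have hν2 : ν ^ 2 < μ ^ 2 * (3 - 2 * Real.sqrt 2) := by nlinarith
  have h1 : ν ^ 2 * (3 + 2 * Real.sqrt 2) < μ ^ 2 := by
    nlinarith [mul_lt_mul_of_pos_right hν2
      (show (0:ℝ) < 3 + 2 * Real.sqrt 2 by positivity), sq_nonneg μ]
  have hsin : Real.sin ψ ^ 2 ≤ 1 := Real.sin_sq_le_one ψ
  have hcosh : 1 ≤ Real.cosh φ := Real.one_le_cosh φ
  have hsin0 : 0 ≤ Real.sin ψ ^ 2 := sq_nonneg _
  have hc2 : (1:ℝ) ≤ Real.cosh φ ^ 2 := by nlinarith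
  have hbb : μ ^ 2 ≤ μ ^ 2 * Real.cosh φ ^ 2 := by
    nlinarith [mul_nonneg (sq_nonneg μ) (show (0:ℝ) ≤ Real.cosh φ ^ 2 - 1 by linarith)]
  have h2 : (ν ^ 2 * Real.sin ψ ^ 2) * (3 + 2 * Real.sqrt 2)
      < μ ^ 2 * Real.cosh φ ^ 2 := by
    nlinarith [mul_nonneg (mul_nonneg (sq_nonneg ν)
      (show (0:ℝ) ≤ 3 + 2 * Real.sqrt 2 by positivity))
      (show (0:ℝ) ≤ 1 - Real.sin ψ ^ 2 by linarith)]
  have h4 := key_ineq (Real.sqrt 2) (ν ^ 2 * Real.sin ψ ^ 2) (μ ^ 2 * Real.cosh φ ^ 2)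
    hs0 hs (by positivity) h2
  have hD : 0 < (ν ^ 2 * Real.sin ψ ^ 2 + μ ^ 2 * Real.cosh φ ^ 2) ^ 2 := by
    have : 0 < Real.cosh φ := Real.cosh_pos φ
    positivity
  have hlt : 8 * μ ^ 2 * ν ^ 2 * Real.sin ψ ^ 2 * Real.cosh φ ^ 2
      / (ν ^ 2 * Real.sin ψ ^ 2 + μ ^ 2 * Real.cosh φ ^ 2) ^ 2 < 1 := by
    rw [div_lt_one hD]
    nlinarith [h4]
  linarith
end

section
/- Let μ > 0 and ν > 0 satisfy ν/μ > tan(π/8). Then there exist ψ, φ ∈ ℝ such that 1 − 8μ²ν²·sin²ψ·cosh²φ/(ν²·sin²ψ + μ²·cosh²φ)² < 0. -/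
/-- If `ν/μ > tan(π/8)` then `∂x/∂x̂` is negative somewhere: the breather formulas of
the short pulse equation represent a multivalued solution. -/
theorem breather_multivalued (μ ν : ℝ) (hμ : 0 < μ) (hν : 0 < ν)
    (h : Real.tan (Real.pi / 8) < ν / μ) :
    ∃ ψ φ : ℝ,
      1 - 8 * μ ^ 2 * ν ^ 2 * Real.sin ψ ^ 2 * Real.cosh φ ^ 2
            / (ν ^ 2 * Real.sin ψ ^ 2 + μ ^ 2 * Real.cosh φ ^ 2) ^ 2 < 0 := by
  have s2 : Real.sqrt 2 ^ 2 = 2 := Real.sq_sqrt (by norm_num)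
  have s2nn := Real.sqrt_nonneg 2
  rw [tan_pi_div_eight', lt_div_iff₀ hμ] at h
  have main : ∀ a b : ℝ, 0 < a → 0 < b → a ^ 2 + b ^ 2 < 6 * a * b →
      1 - 8 * a * b / (a + b) ^ 2 < 0 := by
    intro a b ha hb hab
    rw [sub_neg, lt_div_iff₀ (by positivity)]
    nlinarith
  by_cases hc : ν ≤ μ
  · refine ⟨Real.pi / 2, 0, ?_⟩
    rw [Real.sin_pi_div_two, Real.cosh_zero]
    have hnn : 0 ≤ (Real.sqrt 2 - 1) * μ := by nlinarith
    have k1 : ((Real.sqrt 2 - 1) * μ) ^ 2 < ν ^ 2 := by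
      exact pow_lt_pow_left₀ h hnn (by norm_num)
    have k2 : ν ^ 2 ≤ μ ^ 2 := by nlinarith
    have k3 : (0:ℝ) < ν ^ 2 - (3 - 2 * Real.sqrt 2) * μ ^ 2 := by nlinarith
    have k4 : (0:ℝ) < (3 + 2 * Real.sqrt 2) * μ ^ 2 - ν ^ 2 := by nlinarith
    have k5 := mul_pos k3 k4
    have := main (ν ^ 2) (μ ^ 2) (by positivity) (by positivity) (by nlinarith [k5, s2])
    convert this using 2 <;> ring
  · push_neg at hc
    refine ⟨Real.pi / 2, Real.arsinh (Real.sqrt (ν ^ 2 / μ ^ 2 - 1)), ?_⟩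
    rw [Real.sin_pi_div_two, Real.cosh_arsinh]
    have h1 : 0 ≤ ν ^ 2 / μ ^ 2 - 1 := by
      rw [sub_nonneg, le_div_iff₀ (by positivity)]; nlinarith
    have h2 : Real.sqrt (1 + Real.sqrt (ν ^ 2 / μ ^ 2 - 1) ^ 2) ^ 2 = ν ^ 2 / μ ^ 2 := by
      rw [Real.sq_sqrt (by positivity), Real.sq_sqrt h1]; ring
    rw [h2]
    have e1 : 8 * μ ^ 2 * ν ^ 2 * (1:ℝ) ^ 2 * (ν ^ 2 / μ ^ 2) = 8 * ν ^ 2 * ν ^ 2 := by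
      field_simp
    have e2 : ν ^ 2 * (1:ℝ) ^ 2 + μ ^ 2 * (ν ^ 2 / μ ^ 2) = ν ^ 2 + ν ^ 2 := by
      field_simp
    rw [e1, e2]
    exact main (ν ^ 2) (ν ^ 2) (by positivity) (by positivity) (by nlinarith [pow_pos hν 4])
end
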